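/- Let H be a linear hypergraph with at most n edges in which every vertex has degree at least √n, and let v be a vertex with d(v) = √n and |adj(v)| = n. Then every edge containing v has exactly √n + 1 vertices, and every vertex adjacent to v has degree exactly √n. -/
import Mathlib


open scoped Classical

/-- A finite hypergraph is given by its finite set of edges, each a finite set of vertices.
`Linear E` means any two distinct edges share at most one vertex. -/
def HG.Linear {V : Type*} (E : Finset (Finset V)) : Prop :=
  ∀ e₁ ∈ E, ∀ e₂ ∈ E, e₁ ≠ e₂ → (e₁ ∩ e₂).card ≤ 1

/-- The degree of a vertex: the number of edges containing it. -/
noncomputable def HG.deg {V : Type*} (E : Finset (Finset V)) (v : V) : ℕ :=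
  (E.filter (fun e => v ∈ e)).card

/-- The vertex set of the hypergraph: the union of its edges. -/
noncomputable def HG.verts {V : Type*} (E : Finset (Finset V)) : Finset V := E.sup id

/-- The adjacency of a vertex `v`: vertices distinct from `v` sharing an edge with `v`. -/
noncomputable def HG.adj {V : Type*} (E : Finset (Finset V)) (v : V) : Finset V :=
  (HG.verts E).filter (fun u => u ≠ v ∧ ∃ e ∈ E, v ∈ e ∧ u ∈ e)

/-- A proper coloring: vertices lying in a common edge receive distinct colors. -/
def HG.Proper {V : Type*} {m : ℕ} (E : Finset (Finset V)) (f : V → Fin m) : Prop :=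
  ∀ e ∈ E, ∀ u ∈ e, ∀ w ∈ e, u ≠ w → f u ≠ f w

lemma HG.mem_verts_of_mem {V : Type*} {E : Finset (Finset V)} {e : Finset V}
    (he : e ∈ E) {w : V} (hw : w ∈ e) : w ∈ HG.verts E := by
  have hsub : e ⊆ HG.verts E := Finset.le_sup (f := id) he
  exact hsub hw

lemma HG.two_le_inter {V : Type*} {e₁ e₂ : Finset V} {u w : V} (hne : u ≠ w)
    (hu1 : u ∈ e₁) (hu2 : u ∈ e₂) (hw1 : w ∈ e₁) (hw2 : w ∈ e₂)
    {inst : DecidableEq V} :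
    1 < (@Inter.inter _ (@Finset.instInter V inst) e₁ e₂).card := by
  letI := inst
  exact Finset.one_lt_card.mpr ⟨u, Finset.mem_inter.mpr ⟨hu1, hu2⟩,
    w, Finset.mem_inter.mpr ⟨hw1, hw2⟩, hne⟩

lemma HG.countA {V : Type*} [DecidableEq V] {E : Finset (Finset V)} (hlin : HG.Linear E)
    {e : Finset V} (he : e ∈ E) :
    ∑ w ∈ e, (HG.deg E w - 1) ≤ E.card - 1 := by
  have hterm : ∀ w ∈ e, HG.deg E w - 1 = (E.filter (fun f => w ∈ f ∧ f ≠ e)).card := by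
    intro w hw
    have h1 : E.filter (fun f => w ∈ f ∧ f ≠ e) = (E.filter (fun f => w ∈ f)).erase e := by
      ext f
      simp only [Finset.mem_filter, Finset.mem_erase]
      tauto
    rw [h1, Finset.card_erase_of_mem (by simp [he, hw]), HG.deg]
    congr!
  have hdisj : ∀ w₁ ∈ e, ∀ w₂ ∈ e, w₁ ≠ w₂ →
      Disjoint (E.filter (fun f => w₁ ∈ f ∧ f ≠ e)) (E.filter (fun f => w₂ ∈ f ∧ f ≠ e)) := by
    intro w₁ h₁ w₂ h₂ hne
    rw [Finset.disjoint_left]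
    intro f hf₁ hf₂
    simp only [Finset.mem_filter] at hf₁ hf₂
    exact absurd (hlin f hf₁.1 e he hf₁.2.2)
      (Nat.not_le.mpr (HG.two_le_inter hne hf₁.2.1 h₁ hf₂.2.1 h₂))
  calc ∑ w ∈ e, (HG.deg E w - 1)
      = ∑ w ∈ e, (E.filter (fun f => w ∈ f ∧ f ≠ e)).card := Finset.sum_congr rfl hterm
    _ = (e.biUnion (fun w => E.filter (fun f => w ∈ f ∧ f ≠ e))).card :=
        (Finset.card_biUnion hdisj).symm
    _ ≤ (E.erase e).card := Finset.card_le_card (by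
        intro f hf
        simp only [Finset.mem_biUnion, Finset.mem_filter] at hf
        obtain ⟨w, _, hfE, _, hfe⟩ := hf
        exact Finset.mem_erase.mpr ⟨hfe, hfE⟩)
    _ = E.card - 1 := Finset.card_erase_of_mem he

theorem stmt19 {V : Type*} [DecidableEq V] (k : ℕ) (hk : 0 < k)
    (E : Finset (Finset V)) (hlin : HG.Linear E) (hE : E.card ≤ k ^ 2)
    (hdeg : ∀ u ∈ HG.verts E, k ≤ HG.deg E u)
    (v : V) (hdv : HG.deg E v = k) (hadj : (HG.adj E v).card = k ^ 2) :
    (∀ e ∈ E, v ∈ e → e.card = k + 1) ∧ (∀ u ∈ HG.adj E v, HG.deg E u = k) := by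
  obtain ⟨m, rfl⟩ : ∃ m, k = m + 1 := ⟨k - 1, by omega⟩
  have hpow : (m + 1) ^ 2 = (m + 2) * m + 1 := by ring
  set F := E.filter (fun e => v ∈ e) with hF
  have hFcard : F.card = m + 1 := by
    rw [hF, ← hdv, HG.deg]
    congr!
  have hFmem : ∀ e ∈ F, e ∈ E ∧ v ∈ e := fun e he => Finset.mem_filter.mp he
  have hdisjF : ∀ e₁ ∈ F, ∀ e₂ ∈ F, e₁ ≠ e₂ → Disjoint (e₁.erase v) (e₂.erase v) := by
    intro e₁ h₁ e₂ h₂ hne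
    obtain ⟨h₁E, h₁v⟩ := hFmem e₁ h₁
    obtain ⟨h₂E, h₂v⟩ := hFmem e₂ h₂
    rw [Finset.disjoint_left]
    intro u hu₁ hu₂
    rw [Finset.mem_erase] at hu₁ hu₂
    exact absurd (hlin e₁ h₁E e₂ h₂E hne)
      (Nat.not_le.mpr (HG.two_le_inter hu₁.1 hu₁.2 hu₂.2 h₁v h₂v))
  have hadjeq : HG.adj E v = F.biUnion (fun e => e.erase v) := by
    ext u
    simp only [HG.adj, hF, Finset.mem_filter, Finset.mem_biUnion, Finset.mem_erase]
    constructor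
    · rintro ⟨_, hne, e, heE, hv, hue⟩
      exact ⟨e, ⟨heE, hv⟩, hne, hue⟩
    · rintro ⟨e, ⟨heE, hv⟩, hne, hue⟩
      exact ⟨HG.mem_verts_of_mem heE hue, hne, e, heE, hv, hue⟩
  have hsum : ∑ e ∈ F, (e.card - 1) = (m + 1) ^ 2 := by
    rw [← hadj, hadjeq, Finset.card_biUnion hdisjF]
    exact (Finset.sum_congr rfl fun e he => (Finset.card_erase_of_mem (hFmem e he).2)).symm
  have hub : ∀ e ∈ F, e.card - 1 ≤ m + 1 := by
    intro e he
    obtain ⟨heE, hev⟩ := hFmem e he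
    by_cases hm : m = 0
    · subst hm
      have h1 : e.card - 1 ≤ ∑ e ∈ F, (e.card - 1) :=
        Finset.single_le_sum (f := fun e => e.card - 1) (fun _ _ => Nat.zero_le _) he
      rw [hsum] at h1
      omega
    · have hcount := HG.countA hlin heE
      have hlo : e.card * m ≤ ∑ w ∈ e, (HG.deg E w - 1) := by
        have h := Finset.card_nsmul_le_sum e (fun w => HG.deg E w - 1) m
          (fun w hw => by
            show m ≤ HG.deg E w - 1
            have := hdeg w (HG.mem_verts_of_mem heE hw)
            omega)
        simpa [smul_eq_mul] using h
      have hup : e.card * m ≤ (m + 2) * m := by omega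
      have := Nat.le_of_mul_le_mul_right hup (by omega : 0 < m)
      omega
  have heach : ∀ e ∈ F, e.card - 1 = m + 1 := by
    by_contra h
    push_neg at h
    obtain ⟨e₀, he₀, hne⟩ := h
    have hlt : ∑ e ∈ F, (e.card - 1) < ∑ _e ∈ F, (m + 1) :=
      Finset.sum_lt_sum (fun e he => hub e he)
        ⟨e₀, he₀, lt_of_le_of_ne (hub e₀ he₀) hne⟩
    rw [hsum, Finset.sum_const, hFcard, smul_eq_mul] at hlt
    have h2 : (m + 1) * (m + 1) = (m + 1) ^ 2 := by ring
    omega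
  have part1 : ∀ e ∈ E, v ∈ e → e.card = m + 1 + 1 := by
    intro e heE hev
    have he : e ∈ F := Finset.mem_filter.mpr ⟨heE, hev⟩
    have h1 := heach e he
    have h2 : 0 < e.card := Finset.card_pos.mpr ⟨v, hev⟩
    omega
  refine ⟨part1, ?_⟩
  intro u hu
  have hu' := hu
  simp only [HG.adj, Finset.mem_filter] at hu'
  obtain ⟨huV, hne, e, heE, hev, hue⟩ := hu'
  have hecard : e.card = m + 1 + 1 := part1 e heE hev
  have hcount := HG.countA hlin heE
  have hsplit : (HG.deg E u - 1) + ∑ w ∈ e.erase u, (HG.deg E w - 1) =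
      ∑ w ∈ e, (HG.deg E w - 1) :=
    Finset.add_sum_erase e (fun w => HG.deg E w - 1) hue
  have hlo : (e.erase u).card * m ≤ ∑ w ∈ e.erase u, (HG.deg E w - 1) := by
    have h := Finset.card_nsmul_le_sum (e.erase u) (fun w => HG.deg E w - 1) m
      (fun w hw => by
        show m ≤ HG.deg E w - 1
        have := hdeg w (HG.mem_verts_of_mem heE (Finset.mem_of_mem_erase hw))
        omega)
    simpa [smul_eq_mul] using h
  have hce : (e.erase u).card = m + 1 := by
    rw [Finset.card_erase_of_mem hue, hecard]
    omega
  rw [hce] at hlo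
  have hdu : m + 1 ≤ HG.deg E u := hdeg u huV
  have h1 : (m + 1) * m + m = (m + 2) * m := by ring
  omega
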